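/- Let K be a field of characteristic zero and let f = b/(c·d^λ), where λ ≥ 1 is an integer, c ∈ K[x,y] is nonzero, and b, d ∈ K[x,y,z] with d ≠ 0 and deg_z(b) < deg_z(d). Suppose: (1) σ_x^m(d) = σ_y^n(σ_z^k(d)) for some integers m, n, k with m > 0; (2) σ_y^{n_1}(d) = σ_z^{k_1}(d) for some integers n_1, k_1 with n_1 > 0; and (3) σ_x^{m_2}(c) = σ_y^{n_2}(c) for some integers m_2, n_2 with m_2 > 0. Then f has a telescoper of type (S_x, Δ_y, Δ_z). -/

import Mathlib

open MvPolynomial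

noncomputable section

/-- The field `K(x,y,z)` of rational functions in three variables over `K`,
realized as the fraction field of `K[x,y,z]` (`x`, `y`, `z` have indices `0`, `1`, `2`). -/
abbrev F3 (K : Type*) [Field K] := FractionRing (MvPolynomial (Fin 3) K)

/-- The canonical image of a polynomial in `K(x,y,z)`. -/
def toF3 (K : Type*) [Field K] (p : MvPolynomial (Fin 3) K) : F3 K :=
  algebraMap (MvPolynomial (Fin 3) K) (F3 K) p

/-- The rational function `x`. -/
def xv (K : Type*) [Field K] : F3 K := toF3 K (X 0)

/-- The rational function `y`. -/
def yv (K : Type*) [Field K] : F3 K := toF3 K (X 1)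

/-- The rational function `z`. -/
def zv (K : Type*) [Field K] : F3 K := toF3 K (X 2)

/-- `a` is an element of `K(x,y)[z]` (polynomial in `z` with coefficients in `K(x,y)`)
whose degree in `z` is `< N`: it can be written as `p/q` with `q ∈ K[x,y] \ {0}` and
`deg_z p < N`. -/
def MemKxyPolyZLt (K : Type*) [Field K] (a : F3 K) (N : ℕ) : Prop :=
  ∃ p q : MvPolynomial (Fin 3) K, q ≠ 0 ∧
    q ∈ MvPolynomial.supported K ({0, 1} : Set (Fin 3)) ∧
    p.degreeOf 2 < N ∧ a = toF3 K p / toF3 K q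

/-- `f` is `(Δ_y, Δ_z)`-exact: `f = Δ_y g + Δ_z h` for some `g, h ∈ K(x,y,z)`. -/
def ExactYZ (K : Type*) [Field K] (σy σz : F3 K ≃ₐ[K] F3 K) (f : F3 K) : Prop :=
  ∃ g h : F3 K, f = (σy g - g) + (σz h - h)

/-- `f` has a telescoper of type `(S_x, Δ_y, Δ_z)`: there are `e 0, …, e ρ ∈ K(x)`,
not all zero, and `g, h ∈ K(x,y,z)` with `∑ i, e i · σ_x^i f = Δ_y g + Δ_z h`. -/
def HasTelescoperSxΔyΔz (K : Type*) [Field K] (σx σy σz : F3 K ≃ₐ[K] F3 K)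
    (f : F3 K) : Prop :=
  ∃ (ρ : ℕ) (e : Fin (ρ + 1) → F3 K),
    (∀ i, e i ∈ IntermediateField.adjoin K {xv K}) ∧ (∃ i, e i ≠ 0) ∧
    ∃ g h : F3 K,
      ∑ i : Fin (ρ + 1), e i * (σx ^ (i : ℕ)) f = (σy g - g) + (σz h - h)

/-!
Write `T(a,b,c) = σx^a σy^b σz^c`; on polynomials it is the translation `shift (a,b,c)`. The
invariance conditions say that the translation stabilizers of `d` and of `c` contain `(m,-n,-k)`,
`(0,n₁,-k₁)` and `(m₂,-n₂,0)`, `(0,0,1)` respectively, so an integer combination gives a common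
element `w = (M,A,B)` with `M > 0`, which then stabilizes `D = c d^λ`. Hence
`σx^{jM} f = σy^{-jA} σz^{-jB} uⱼ` with `uⱼ = shift (j w) b / D`, i.e. `σx^{jM} f ≡ uⱼ` modulo
`Δ_y, Δ_z`-exact elements. Translations do not raise `deg_y` or `deg_z`, so all `uⱼ` lie in the
`K(x)`-span of the finitely many `y^i z^l / D`, and a nontrivial `K(x)`-linear relation among them
is a telescoper.
-/

namespace MvPolynomial

variable {σ R : Type*} [CommRing R]

lemma degreeOf_X_le_ite [DecidableEq σ] (i j : σ) :
    degreeOf i (X j : MvPolynomial σ R) ≤ if j = i then 1 else 0 :=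
  degreeOf_le_iff.2 fun m hm => by
    rw [Finset.mem_singleton.1 (support_monomial_subset hm), Finsupp.single_apply]

lemma degreeOf_aeval_le [DecidableEq σ] {i : σ} {g : σ → MvPolynomial σ R}
    (hg : ∀ j, degreeOf i (g j) ≤ if j = i then 1 else 0) (p : MvPolynomial σ R) :
    degreeOf i (aeval g p) ≤ degreeOf i p := by
  conv_lhs => rw [p.as_sum]
  rw [map_sum]
  refine (degreeOf_sum_le _ _ _).trans (Finset.sup_le fun m hm => ?_)
  have hprod : degreeOf i (m.prod fun j e => g j ^ e) ≤ m i := calc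
    _ ≤ ∑ j ∈ m.support, degreeOf i (g j ^ m j) := degreeOf_prod_le _ _ _
    _ ≤ ∑ j ∈ m.support, if j = i then m j else 0 := Finset.sum_le_sum fun j _ => by
      refine (degreeOf_pow_le _ _ _).trans ?_
      have := Nat.mul_le_mul_left (m j) (hg j)
      split_ifs at this ⊢ <;> simpa using this
    _ ≤ m i := by rw [Finset.sum_ite_eq']; split_ifs <;> simp
  rw [aeval_monomial, algebraMap_eq]
  exact (degreeOf_C_mul_le _ _ _).trans (hprod.trans (monomial_le_degreeOf i hm))

def shift (v : σ → R) : MvPolynomial σ R →ₐ[R] MvPolynomial σ R :=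
  aeval fun i => X i + C (v i)

@[simp]
lemma shift_X (v : σ → R) (i : σ) : shift v (X i) = X i + C (v i) :=
  aeval_X _ i

lemma shift_add (v w : σ → R) (p : MvPolynomial σ R) :
    shift (v + w) p = shift v (shift w p) := by
  suffices shift (v + w) = (shift v).comp (shift w) from DFunLike.congr_fun this p
  ext i
  simp [add_assoc]

lemma shift_zero (p : MvPolynomial σ R) : shift 0 p = p := by
  suffices shift (0 : σ → R) = AlgHom.id R _ from DFunLike.congr_fun this p
  ext i
  simp

lemma degreeOf_shift_le (v : σ → R) (i : σ) (p : MvPolynomial σ R) :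
    degreeOf i (shift v p) ≤ degreeOf i p := by
  classical
  refine degreeOf_aeval_le (fun j => ?_) p
  exact (degreeOf_add_le _ _ _).trans (max_le (degreeOf_X_le_ite i j) (by simp [degreeOf_C]))

def shiftStabilizer (p : MvPolynomial σ R) : AddSubgroup (σ → R) where
  carrier := {v | shift v p = p}
  zero_mem' := shift_zero p
  add_mem' {v w} hv hw := by simp_all [shift_add]
  neg_mem' {v} hv := by
    calc shift (-v) p = shift (-v) (shift v p) := by rw [hv]
      _ = p := by rw [← shift_add, neg_add_cancel, shift_zero]

lemma mem_shiftStabilizer {v : σ → R} {p : MvPolynomial σ R} :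
    v ∈ shiftStabilizer p ↔ shift v p = p :=
  Iff.rfl

lemma sub_mem_shiftStabilizer_of_shift_eq {v w : σ → R} {p : MvPolynomial σ R}
    (h : shift v p = shift w p) : v - w ∈ shiftStabilizer p := by
  rw [mem_shiftStabilizer, sub_eq_neg_add, shift_add, h, ← shift_add, neg_add_cancel, shift_zero]

lemma mem_shiftStabilizer_of_mem_supported {v : σ → R} {s : Set σ} {p : MvPolynomial σ R}
    (hp : p ∈ supported R s) (hv : ∀ i ∈ s, v i = 0) : v ∈ shiftStabilizer p := by
  rw [mem_supported] at hp
  refine hom_congr_vars (f₂ := RingHom.id _) (by ext; simp [shift]) (fun i hi _ => ?_) rfl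
  simp [hv i (hp hi)]

end MvPolynomial

lemma exists_natCast_mem_shiftStabilizer_inf {R : Type*} [CommRing R]
    {c d : MvPolynomial (Fin 3) R} {m n k n₁ k₁ m₂ n₂ : ℤ} (hm : 0 < m) (hn₁ : 0 < n₁)
    (hm₂ : 0 < m₂) (hd : ![(m : R), -n, -k] ∈ shiftStabilizer d)
    (hd' : ![0, (n₁ : R), -k₁] ∈ shiftStabilizer d) (hc : ![(m₂ : R), -n₂, 0] ∈ shiftStabilizer c)
    (hc' : ![0, 0, 1] ∈ shiftStabilizer c) :
    ∃ (M : ℕ) (A B : ℤ), 0 < M ∧ ![(M : R), A, B] ∈ shiftStabilizer c ⊓ shiftStabilizer d := by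
  obtain ⟨M, hM⟩ := Int.eq_ofNat_of_zero_le (by positivity : 0 ≤ m * m₂ * n₁)
  have hMpos : 0 < M := by have := mul_pos (mul_pos hm hm₂) hn₁; omega
  have hMR : (M : R) = ((m * m₂ * n₁ : ℤ) : R) := by rw [hM, Int.cast_natCast]
  refine ⟨M, -(m * n₁ * n₂), -(m₂ * n₁ * k + (n * m₂ - m * n₂) * k₁), hMpos,
    AddSubgroup.mem_inf.2 ⟨?_, ?_⟩⟩
  · convert add_mem (zsmul_mem hc (m * n₁))
      (zsmul_mem hc' (-(m₂ * n₁ * k + (n * m₂ - m * n₂) * k₁))) using 1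
    ext i; fin_cases i <;> simp [hMR]
    ring
  · convert add_mem (zsmul_mem hd (m₂ * n₁)) (zsmul_mem hd' (n * m₂ - m * n₂)) using 1
    ext i; fin_cases i <;> simp [hMR] <;> ring

lemma exists_nontrivial_relation_of_forall_mem_span {R M ι : Type*} [Ring R]
    [StrongRankCondition R] [AddCommGroup M] [Module R M] [Infinite ι] (v : ι → M) (w : Set M)
    [Finite w] (hv : ∀ i, v i ∈ Submodule.span R w) :
    ∃ s : Finset ι, ∃ g : ι → R, ∑ i ∈ s, g i • v i = 0 ∧ ∃ i ∈ s, g i ≠ 0 :=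
  not_linearIndependent_iff.1 fun hli =>
    have := hli.finite_of_le_span_finite v w (Set.range_subset_iff.2 hv)
    not_finite ι

lemma exists_zpow_apply_sub_eq {R A : Type*} [CommSemiring R] [CommRing A] [Algebra R A]
    (σ : A ≃ₐ[R] A) (u : A) (t : ℤ) : ∃ g, (σ ^ t) u - u = σ g - g := by
  induction t using Int.induction_on with
  | zero => exact ⟨0, by simp⟩
  | succ t ih =>
    obtain ⟨g, hg⟩ := ih
    refine ⟨g + (σ ^ (t : ℤ)) u, ?_⟩
    rw [add_comm, zpow_one_add, AlgEquiv.mul_apply, map_add]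
    linear_combination hg
  | pred t ih =>
    obtain ⟨g, hg⟩ := ih
    refine ⟨g - (σ ^ (-(t : ℤ) - 1)) u, ?_⟩
    have hσ : σ ((σ ^ (-(t : ℤ) - 1)) u) = (σ ^ (-(t : ℤ))) u := by
      rw [← AlgEquiv.mul_apply, ← zpow_one_add, add_sub_cancel]
    rw [map_sub, hσ]
    linear_combination hg

open IntermediateField

section RationalFunctions

variable {K : Type*} [Field K]

lemma toF3_injective : Function.Injective (toF3 K) :=
  IsFractionRing.injective _ _

def IsShiftBy (τ : F3 K ≃ₐ[K] F3 K) (v : Fin 3 → K) : Prop :=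
  ∀ p, τ (toF3 K p) = toF3 K (shift v p)

lemma isShiftBy_of_apply_xyz {τ : F3 K ≃ₐ[K] F3 K} {a b c : K}
    (hx : τ (xv K) = xv K + algebraMap K (F3 K) a)
    (hy : τ (yv K) = yv K + algebraMap K (F3 K) b)
    (hz : τ (zv K) = zv K + algebraMap K (F3 K) c) :
    IsShiftBy τ ![a, b, c] := by
  let ι := IsScalarTower.toAlgHom K (MvPolynomial (Fin 3) K) (F3 K)
  suffices (τ : F3 K →ₐ[K] F3 K).comp ι = ι.comp (shift ![a, b, c]) from
    fun p => DFunLike.congr_fun this p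
  ext i
  fin_cases i <;>
    simp only [ι, AlgHom.comp_apply, shift_X, map_add, ← algebraMap_eq] <;> assumption

namespace IsShiftBy

variable {τ τ' : F3 K ≃ₐ[K] F3 K} {v v' : Fin 3 → K}

lemma mul (h : IsShiftBy τ v) (h' : IsShiftBy τ' v') : IsShiftBy (τ * τ') (v + v') := fun p => by
  rw [AlgEquiv.mul_apply, h', h, shift_add]

lemma inv (h : IsShiftBy τ v) : IsShiftBy τ⁻¹ (-v) := fun p => by
  rw [AlgEquiv.aut_inv, AlgEquiv.symm_apply_eq, h, ← shift_add, add_neg_cancel, shift_zero]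

lemma zpow (h : IsShiftBy τ v) (t : ℤ) : IsShiftBy (τ ^ t) (t • v) := by
  induction t using Int.induction_on with
  | zero => intro p; simp [shift_zero]
  | succ t ih => rw [zpow_add_one, add_smul, one_smul]; exact ih.mul h
  | pred t ih => rw [zpow_sub_one, sub_smul, one_smul, sub_eq_add_neg]; exact ih.mul h.inv

end IsShiftBy

lemma sub_mem_shiftStabilizer_of_apply_eq {τ τ' : F3 K ≃ₐ[K] F3 K} {v v' : Fin 3 → K}
    (hτ : IsShiftBy τ v) (hτ' : IsShiftBy τ' v') {p : MvPolynomial (Fin 3) K}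
    (h : τ (toF3 K p) = τ' (toF3 K p)) : v - v' ∈ shiftStabilizer p :=
  sub_mem_shiftStabilizer_of_shift_eq (toF3_injective (by rwa [← hτ, ← hτ']))

lemma apply_div_eq_of_mem_shiftStabilizer {τ τ' : F3 K ≃ₐ[K] F3 K} {a w : Fin 3 → K}
    (hτ : IsShiftBy τ (a + w)) (hτ' : IsShiftBy τ' a) {q : MvPolynomial (Fin 3) K}
    (hw : w ∈ shiftStabilizer q) (p : MvPolynomial (Fin 3) K) :
    τ (toF3 K p / toF3 K q) = τ' (toF3 K (shift w p) / toF3 K q) := by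
  rw [map_div₀, map_div₀, hτ, hτ, hτ', hτ', shift_add, shift_add, mem_shiftStabilizer.1 hw]

lemma apply_eq_self_of_mem_adjoin_xv {τ : F3 K ≃ₐ[K] F3 K} (hx : τ (xv K) = xv K) {e : F3 K}
    (he : e ∈ K⟮xv K⟯) : τ e = e := by
  induction he using IntermediateField.adjoin_induction with
  | mem u hu => rw [Set.mem_singleton_iff.1 hu, hx]
  | algebraMap r => exact τ.commutes r
  | add u v _ _ hu hv => rw [map_add, hu, hv]
  | inv u _ hu => rw [map_inv₀, hu]
  | mul u v _ _ hu hv => rw [map_mul, hu, hv]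

lemma toF3_div_mem_span (D : F3 K) {dy dz : ℕ} {q : MvPolynomial (Fin 3) K}
    (hy : degreeOf 1 q ≤ dy) (hz : degreeOf 2 q ≤ dz) :
    toF3 K q / D ∈ Submodule.span K⟮xv K⟯
      ((fun il : ℕ × ℕ => toF3 K (X 1 ^ il.1 * X 2 ^ il.2) / D) '' Set.Iic dy ×ˢ Set.Iic dz) := by
  have hq : toF3 K q = ∑ m ∈ q.support, toF3 K (monomial m (coeff m q)) := by
    conv_lhs => rw [q.as_sum]
    exact map_sum _ _ _
  rw [hq, Finset.sum_div]
  refine Submodule.sum_mem _ fun m hm => ?_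
  have hsplit : monomial m (coeff m q) = (C (coeff m q) * X 0 ^ m 0) * (X 1 ^ m 1 * X 2 ^ m 2) := by
    rw [monomial_eq, Finsupp.prod_fintype _ _ (fun i => pow_zero _), Fin.prod_univ_three]
    ring
  have hcoeff : toF3 K (C (coeff m q) * X 0 ^ m 0) ∈ K⟮xv K⟯ := by
    rw [toF3, map_mul, map_pow, ← algebraMap_eq, ← IsScalarTower.algebraMap_apply]
    exact mul_mem (IntermediateField.algebraMap_mem _ _)
      (pow_mem (mem_adjoin_simple_self K (xv K)) _)
  rw [hsplit, toF3, map_mul, mul_div_assoc]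
  have hmem : toF3 K (X 1 ^ m 1 * X 2 ^ m 2) / D ∈
      (fun il : ℕ × ℕ => toF3 K (X 1 ^ il.1 * X 2 ^ il.2) / D) '' Set.Iic dy ×ˢ Set.Iic dz :=
    ⟨(m 1, m 2), ⟨(monomial_le_degreeOf 1 hm).trans hy, (monomial_le_degreeOf 2 hm).trans hz⟩, rfl⟩
  exact Submodule.smul_mem _ (⟨_, hcoeff⟩ : K⟮xv K⟯) (Submodule.subset_span hmem)

namespace ExactYZ

variable {σy σz : F3 K ≃ₐ[K] F3 K}

lemma add {f f' : F3 K} (h : ExactYZ K σy σz f) (h' : ExactYZ K σy σz f') :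
    ExactYZ K σy σz (f + f') := by
  obtain ⟨gy, gz, rfl⟩ := h
  obtain ⟨gy', gz', rfl⟩ := h'
  exact ⟨gy + gy', gz + gz', by simp only [map_add]; ring⟩

lemma sum {ι : Type*} (s : Finset ι) {f : ι → F3 K} (h : ∀ i ∈ s, ExactYZ K σy σz (f i)) :
    ExactYZ K σy σz (∑ i ∈ s, f i) :=
  Finset.sum_induction _ _ (fun _ _ => add) ⟨0, 0, by simp⟩ h

lemma mul_left {e f : F3 K} (hy : σy e = e) (hz : σz e = e) (h : ExactYZ K σy σz f) :
    ExactYZ K σy σz (e * f) := by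
  obtain ⟨gy, gz, rfl⟩ := h
  exact ⟨e * gy, e * gz, by simp only [map_mul, hy, hz]; ring⟩

end ExactYZ

lemma exactYZ_zpow_zpow_apply_sub (σy σz : F3 K ≃ₐ[K] F3 K) (a b : ℤ) (u : F3 K) :
    ExactYZ K σy σz ((σy ^ a) ((σz ^ b) u) - u) := by
  obtain ⟨g, hg⟩ := exists_zpow_apply_sub_eq σy ((σz ^ b) u) a
  obtain ⟨h, hh⟩ := exists_zpow_apply_sub_eq σz u b
  exact ⟨g, h, by linear_combination hg + hh⟩

lemma hasTelescoperSxΔyΔz_of_exactYZ_sum {σx σy σz : F3 K ≃ₐ[K] F3 K} {f : F3 K}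
    (s : Finset ℕ) (g : ℕ → K⟮xv K⟯) (hg : ∃ i ∈ s, g i ≠ 0)
    (h : ExactYZ K σy σz (∑ i ∈ s, (g i : F3 K) * (σx ^ i) f)) :
    HasTelescoperSxΔyΔz K σx σy σz f := by
  classical
  obtain ⟨G, H, hGH⟩ := h
  have hs : s ⊆ Finset.range (s.sup id + 1) := fun i hi =>
    Finset.mem_range_succ_iff.2 (Finset.le_sup (f := id) hi)
  refine ⟨s.sup id, fun i => if (i : ℕ) ∈ s then (g i : F3 K) else 0, fun i => ?_, ?_, G, H, ?_⟩
  · dsimp only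
    split_ifs
    exacts [(g i).2, zero_mem _]
  · obtain ⟨i, hi, hgi⟩ := hg
    exact ⟨⟨i, Finset.mem_range.1 (hs hi)⟩, by simpa [hi] using hgi⟩
  · dsimp only
    rw [← hGH,
      Fin.sum_univ_eq_sum_range (fun i => (if i ∈ s then (g i : F3 K) else 0) * (σx ^ i) f)]
    simp_rw [ite_mul, zero_mul]
    rw [Finset.sum_ite_mem, Finset.inter_eq_right.2 hs]

lemma hasTelescoperSxΔyΔz_of_exactYZ_sum_mul {σx σy σz : F3 K ≃ₐ[K] F3 K} {f : F3 K}
    {M : ℕ} (hM : 0 < M) (s : Finset ℕ) (g : ℕ → K⟮xv K⟯) (hg : ∃ j ∈ s, g j ≠ 0)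
    (h : ExactYZ K σy σz (∑ j ∈ s, (g j : F3 K) * (σx ^ (j * M)) f)) :
    HasTelescoperSxΔyΔz K σx σy σz f := by
  refine hasTelescoperSxΔyΔz_of_exactYZ_sum (s.image (· * M)) (fun i => g (i / M)) ?_ ?_
  · obtain ⟨j, hj, hgj⟩ := hg
    exact ⟨j * M, Finset.mem_image_of_mem _ hj, by simpa [Nat.mul_div_cancel _ hM] using hgj⟩
  · rw [Finset.sum_image fun i _ j _ hij => Nat.eq_of_mul_eq_mul_right hM hij]
    simpa only [Nat.mul_div_cancel _ hM] using h

lemma isShiftBy_zpow_mul_zpow_mul_zpow {σx σy σz : F3 K ≃ₐ[K] F3 K}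
    (hx : IsShiftBy σx ![1, 0, 0]) (hy : IsShiftBy σy ![0, 1, 0]) (hz : IsShiftBy σz ![0, 0, 1])
    (a b c : ℤ) : IsShiftBy (σx ^ a * σy ^ b * σz ^ c) ![(a : K), b, c] := by
  convert ((hx.zpow a).mul (hy.zpow b)).mul (hz.zpow c) using 1
  ext i; fin_cases i <;> simp

lemma exactYZ_pow_apply_div_sub {σx σy σz : F3 K ≃ₐ[K] F3 K}
    (hT : ∀ a b c : ℤ, IsShiftBy (σx ^ a * σy ^ b * σz ^ c) ![(a : K), b, c])
    {M : ℕ} {A B : ℤ} {q : MvPolynomial (Fin 3) K} (hw : ![(M : K), A, B] ∈ shiftStabilizer q)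
    (p : MvPolynomial (Fin 3) K) :
    ExactYZ K σy σz
      ((σx ^ M) (toF3 K p / toF3 K q) - toF3 K (shift ![(M : K), A, B] p) / toF3 K q) := by
  have hx : IsShiftBy (σx ^ M) ![(M : K), 0, 0] := by
    have := hT M 0 0
    simp only [zpow_natCast, zpow_zero, mul_one, Int.cast_natCast, Int.cast_zero] at this
    exact this
  have hyz : IsShiftBy (σy ^ (-A) * σz ^ (-B)) ![0, -(A : K), -(B : K)] := by
    have := hT 0 (-A) (-B)
    simp only [zpow_zero, one_mul, Int.cast_neg, Int.cast_zero] at this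
    exact this
  have hsum : ![0, -(A : K), -(B : K)] + ![(M : K), A, B] = ![(M : K), 0, 0] := by
    ext i; fin_cases i <;> simp
  rw [apply_div_eq_of_mem_shiftStabilizer (hsum ▸ hx) hyz hw p]
  exact exactYZ_zpow_zpow_apply_sub σy σz (-A) (-B) _

lemma hasTelescoperSxΔyΔz_of_forall_exactYZ_sub {σx σy σz : F3 K ≃ₐ[K] F3 K}
    (hy : σy (xv K) = xv K) (hz : σz (xv K) = xv K) {f : F3 K} {M : ℕ} (hM : 0 < M)
    (u : ℕ → F3 K) (W : Set (F3 K)) [Finite W] (hu : ∀ j, u j ∈ Submodule.span K⟮xv K⟯ W)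
    (hexact : ∀ j, ExactYZ K σy σz ((σx ^ (j * M)) f - u j)) :
    HasTelescoperSxΔyΔz K σx σy σz f := by
  obtain ⟨s, g, hrel, hg⟩ := exists_nontrivial_relation_of_forall_mem_span u W hu
  refine hasTelescoperSxΔyΔz_of_exactYZ_sum_mul hM s g hg ?_
  have hsplit : ∑ j ∈ s, (g j : F3 K) * (σx ^ (j * M)) f
      = ∑ j ∈ s, (g j : F3 K) * ((σx ^ (j * M)) f - u j) := by
    have hrel' : ∑ j ∈ s, (g j : F3 K) * u j = 0 := hrel
    rw [← sub_zero (∑ j ∈ s, _), ← hrel', ← Finset.sum_sub_distrib]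
    simp only [mul_sub]
  rw [hsplit]
  exact ExactYZ.sum s fun j _ => (hexact j).mul_left
    (apply_eq_self_of_mem_adjoin_xv hy (g j).2) (apply_eq_self_of_mem_adjoin_xv hz (g j).2)

lemma exists_natCast_mem_shiftStabilizer_inf_of_invariance {σx σy σz : F3 K ≃ₐ[K] F3 K}
    (hT : ∀ a b c : ℤ, IsShiftBy (σx ^ a * σy ^ b * σz ^ c) ![(a : K), b, c])
    {c d : MvPolynomial (Fin 3) K} (hcxy : c ∈ supported K ({0, 1} : Set (Fin 3)))
    (h1 : ∃ m n k : ℤ, 0 < m ∧ (σx ^ m) (toF3 K d) = (σy ^ n) ((σz ^ k) (toF3 K d)))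
    (h2 : ∃ n₁ k₁ : ℤ, 0 < n₁ ∧ (σy ^ n₁) (toF3 K d) = (σz ^ k₁) (toF3 K d))
    (h3 : ∃ m₂ n₂ : ℤ, 0 < m₂ ∧ (σx ^ m₂) (toF3 K c) = (σy ^ n₂) (toF3 K c)) :
    ∃ (M : ℕ) (A B : ℤ), 0 < M ∧ ![(M : K), A, B] ∈ shiftStabilizer c ⊓ shiftStabilizer d := by
  obtain ⟨m, n, k, hm, h1⟩ := h1
  obtain ⟨n₁, k₁, hn₁, h2⟩ := h2
  obtain ⟨m₂, n₂, hm₂, h3⟩ := h3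
  have hd : ![(m : K), -n, -k] ∈ shiftStabilizer d := by
    simpa using sub_mem_shiftStabilizer_of_apply_eq (hT m 0 0) (hT 0 n k) (p := d)
      (by simpa only [zpow_zero, mul_one, one_mul, AlgEquiv.mul_apply] using h1)
  have hd' : ![0, (n₁ : K), -k₁] ∈ shiftStabilizer d := by
    simpa using sub_mem_shiftStabilizer_of_apply_eq (hT 0 n₁ 0) (hT 0 0 k₁) (p := d)
      (by simpa only [zpow_zero, mul_one, one_mul, AlgEquiv.mul_apply] using h2)
  have hc : ![(m₂ : K), -n₂, 0] ∈ shiftStabilizer c := by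
    convert sub_mem_shiftStabilizer_of_apply_eq (hT m₂ 0 0) (hT 0 n₂ 0) (p := c)
      (by simpa only [zpow_zero, mul_one, one_mul, AlgEquiv.mul_apply] using h3) using 1
    ext i; fin_cases i <;> simp
  have hc' : ![0, 0, 1] ∈ shiftStabilizer c := mem_shiftStabilizer_of_mem_supported hcxy (by simp)
  exact exists_natCast_mem_shiftStabilizer_inf hm hn₁ hm₂ hd hd' hc hc'

end RationalFunctions

theorem hasTelescoperSxΔyΔz_of_invariance_conditions_general
    (K : Type*) [Field K]
    (σx σy σz : F3 K ≃ₐ[K] F3 K)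
    (hσx1 : σx (xv K) = xv K + 1) (hσx2 : σx (yv K) = yv K) (hσx3 : σx (zv K) = zv K)
    (hσy1 : σy (xv K) = xv K) (hσy2 : σy (yv K) = yv K + 1) (hσy3 : σy (zv K) = zv K)
    (hσz1 : σz (xv K) = xv K) (hσz2 : σz (yv K) = yv K) (hσz3 : σz (zv K) = zv K + 1)
    (lam : ℕ)
    (b c d : MvPolynomial (Fin 3) K)
    (hcxy : c ∈ MvPolynomial.supported K ({0, 1} : Set (Fin 3)))
    (h1 : ∃ m n k : ℤ, 0 < m ∧ (σx ^ m) (toF3 K d) = (σy ^ n) ((σz ^ k) (toF3 K d)))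
    (h2 : ∃ n₁ k₁ : ℤ, 0 < n₁ ∧ (σy ^ n₁) (toF3 K d) = (σz ^ k₁) (toF3 K d))
    (h3 : ∃ m₂ n₂ : ℤ, 0 < m₂ ∧ (σx ^ m₂) (toF3 K c) = (σy ^ n₂) (toF3 K c)) :
    HasTelescoperSxΔyΔz K σx σy σz (toF3 K b / (toF3 K c * toF3 K d ^ lam)) := by
  have hx : IsShiftBy σx ![1, 0, 0] :=
    isShiftBy_of_apply_xyz (by simpa using hσx1) (by simpa using hσx2) (by simpa using hσx3)
  have hy : IsShiftBy σy ![0, 1, 0] :=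
    isShiftBy_of_apply_xyz (by simpa using hσy1) (by simpa using hσy2) (by simpa using hσy3)
  have hz : IsShiftBy σz ![0, 0, 1] :=
    isShiftBy_of_apply_xyz (by simpa using hσz1) (by simpa using hσz2) (by simpa using hσz3)
  have hT := isShiftBy_zpow_mul_zpow_mul_zpow hx hy hz
  obtain ⟨M, A, B, hM, hwc, hwd⟩ :=
    exists_natCast_mem_shiftStabilizer_inf_of_invariance hT hcxy h1 h2 h3
  have hw : ![(M : K), A, B] ∈ shiftStabilizer (c * d ^ lam) := by
    rw [mem_shiftStabilizer, map_mul, map_pow, mem_shiftStabilizer.1 hwc, mem_shiftStabilizer.1 hwd]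
  have hf : toF3 K c * toF3 K d ^ lam = toF3 K (c * d ^ lam) := by simp [toF3]
  rw [hf]
  refine hasTelescoperSxΔyΔz_of_forall_exactYZ_sub hσy1 hσz1 hM
    (fun j => toF3 K (shift ![((j * M : ℕ) : K), (j * A : ℤ), (j * B : ℤ)] b) /
      toF3 K (c * d ^ lam))
    _ (fun j => toF3_div_mem_span _ (degreeOf_shift_le _ 1 b) (degreeOf_shift_le _ 2 b))
    (fun j => exactYZ_pow_apply_div_sub hT ?_ b)
  convert nsmul_mem hw j using 1
  ext i; fin_cases i <;> simp

/-- **Sufficiency for telescopers of type `(S_x, Δ_y, Δ_z)`.**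
Let `f = b/(c·d^λ)` with `λ ≥ 1`, `c ∈ K[x,y]` nonzero, `b, d ∈ K[x,y,z]`, `d ≠ 0`,
`deg_z b < deg_z d`.  If (1) `σ_x^m d = σ_y^n (σ_z^k d)` for some integers `m > 0`, `n`,
`k`, (2) `σ_y^{n₁} d = σ_z^{k₁} d` for some integers `n₁ > 0`, `k₁`, and
(3) `σ_x^{m₂} c = σ_y^{n₂} c` for some integers `m₂ > 0`, `n₂`, then `f` has a
telescoper of type `(S_x, Δ_y, Δ_z)`. -/
theorem hasTelescoperSxΔyΔz_of_invariance_conditions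
    (K : Type*) [Field K] [CharZero K]
    (σx σy σz : F3 K ≃ₐ[K] F3 K)
    (hσx1 : σx (xv K) = xv K + 1) (hσx2 : σx (yv K) = yv K) (hσx3 : σx (zv K) = zv K)
    (hσy1 : σy (xv K) = xv K) (hσy2 : σy (yv K) = yv K + 1) (hσy3 : σy (zv K) = zv K)
    (hσz1 : σz (xv K) = xv K) (hσz2 : σz (yv K) = yv K) (hσz3 : σz (zv K) = zv K + 1)
    (lam : ℕ) (hlam : 1 ≤ lam)
    (b c d : MvPolynomial (Fin 3) K)
    (hcxy : c ∈ MvPolynomial.supported K ({0, 1} : Set (Fin 3))) (hc : c ≠ 0)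
    (hd0 : d ≠ 0)
    (hdeg : b.degreeOf 2 < d.degreeOf 2)
    (h1 : ∃ m n k : ℤ, 0 < m ∧ (σx ^ m) (toF3 K d) = (σy ^ n) ((σz ^ k) (toF3 K d)))
    (h2 : ∃ n₁ k₁ : ℤ, 0 < n₁ ∧ (σy ^ n₁) (toF3 K d) = (σz ^ k₁) (toF3 K d))
    (h3 : ∃ m₂ n₂ : ℤ, 0 < m₂ ∧ (σx ^ m₂) (toF3 K c) = (σy ^ n₂) (toF3 K c)) :
    HasTelescoperSxΔyΔz K σx σy σz (toF3 K b / (toF3 K c * toF3 K d ^ lam)) :=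
  hasTelescoperSxΔyΔz_of_invariance_conditions_general K σx σy σz hσx1 hσx2 hσx3 hσy1 hσy2 hσy3 hσz1
    hσz2 hσz3 lam b c d hcxy h1 h2 h3
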